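/- arXiv:2010.16350 — 8 statements merged into one kernel-verified Lean document; each statement's English description precedes it below -/
import Mathlib

section
/- Let p, q > 1 and let sin_{p,q} be the inverse of F_{p,q}(x) = ∫₀ˣ (1 - t^q)^{-1/p} dt on [0, π_{p,q}/2], and cos_{p,q} its derivative. Then |sin_{p,q}(x)|^q + |cos_{p,q}(x)|^p = 1 for all x in [0, π_{p,q}/2]. -/
open MeasureTheory Set intervalIntegral

noncomputable def Fpq (p q x : ℝ) : ℝ := ∫ t in (0:ℝ)..x, (1 - t ^ q) ^ (-(1/p))

lemma aux_anti {p : ℝ} (hp : 0 < p) {a b : ℝ} (ha : 0 < a) (hab : a ≤ b) :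
    b ^ (-(1/p)) ≤ a ^ (-(1/p)) :=
  Real.rpow_le_rpow_of_nonpos ha hab (neg_nonpos.mpr (by positivity))

lemma aux_meas {p q : ℝ} : Measurable (fun t : ℝ => (1 - t ^ q) ^ (-(1/p))) := by fun_prop

lemma aux_int {p q : ℝ} (hp : 1 < p) (hq : 1 < q) :
    IntervalIntegrable (fun t : ℝ => (1 - t ^ q) ^ (-(1/p))) volume 0 1 := by
  have hg : IntervalIntegrable (fun x : ℝ => x ^ (-(1/p))) volume 0 1 :=
    intervalIntegrable_rpow' (by rw [neg_lt_neg_iff, div_lt_one (by linarith)]; linarith)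
  have hg' : IntervalIntegrable (fun x : ℝ => (1 - x) ^ (-(1/p))) volume 0 1 := by
    have := hg.comp_sub_left 1
    simpa using this.symm
  refine hg'.mono_fun' aux_meas.aestronglyMeasurable ?_
  rw [Filter.EventuallyLE, ae_restrict_iff' measurableSet_uIoc]
  filter_upwards with t ht
  rw [uIoc_of_le (zero_le_one), mem_Ioc] at ht
  have h1 : t ^ q ≤ t := by
    calc t ^ q ≤ t ^ (1:ℝ) := Real.rpow_le_rpow_of_exponent_ge ht.1 ht.2 (le_of_lt hq)
    _ = t := Real.rpow_one t
  rw [Real.norm_eq_abs, abs_of_nonneg (Real.rpow_nonneg (by linarith) _)]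
  rcases eq_or_lt_of_le ht.2 with h | h
  · rw [h, Real.one_rpow]
  · exact aux_anti (by linarith) (by linarith) (by linarith)

/-- if `s = sin_{p,q}` is the inverse of `F_{p,q}` on `[0, π_{p,q}/2]` and
`c = cos_{p,q}` is its derivative, then `|s x|^q + |c x|^p = 1` on `[0, π_{p,q}/2]`. -/
theorem stmt_2 (p q : ℝ) (hp : 1 < p) (hq : 1 < q) (s c : ℝ → ℝ)
    (hmap : MapsTo s (Icc 0 (Fpq p q 1)) (Icc 0 1))
    (hinv : InvOn s (Fpq p q) (Icc 0 1) (Icc 0 (Fpq p q 1)))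
    (hderiv : ∀ x ∈ Icc 0 (Fpq p q 1),
      HasDerivWithinAt s (c x) (Icc 0 (Fpq p q 1)) x) :
    ∀ x ∈ Icc 0 (Fpq p q 1), |s x| ^ q + |c x| ^ p = 1 := by
  have hp0 : (0:ℝ) < p := by linarith
  have hq0 : (0:ℝ) < q := by linarith
  set f : ℝ → ℝ := fun t => (1 - t ^ q) ^ (-(1/p)) with hf_def
  have hint : IntervalIntegrable f volume 0 1 := aux_int hp hq
  have hF1 : 0 < Fpq p q 1 := by
    refine intervalIntegral_pos_of_pos_on hint (fun t ht => ?_) zero_lt_one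
    have : t ^ q < 1 := Real.rpow_lt_one (le_of_lt ht.1) ht.2 hq0
    exact Real.rpow_pos_of_pos (by linarith) _
  have hF' : ∀ y : ℝ, 0 ≤ y → y < 1 → HasDerivAt (Fpq p q) (f y) y := by
    intro y hy0 hy1
    have hyq : y ^ q < 1 := Real.rpow_lt_one hy0 hy1 hq0
    have hsub : IntervalIntegrable f volume 0 y := by
      refine hint.mono_set (uIcc_subset_uIcc left_mem_uIcc ?_)
      rw [uIcc_of_le zero_le_one]
      exact ⟨hy0, hy1.le⟩
    have hcont : ContinuousAt f y := by
      have h1 : ContinuousAt (fun t : ℝ => 1 - t ^ q) y :=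
        continuousAt_const.sub (Real.continuousAt_rpow_const y q (Or.inr hq0.le))
      exact h1.rpow_const (Or.inl (by linarith))
    exact integral_hasDerivAt_right hsub
      aux_meas.stronglyMeasurable.stronglyMeasurableAtFilter hcont
  intro x hx
  have hsx : s x ∈ Icc (0:ℝ) 1 := hmap hx
  have hFsx : Fpq p q (s x) = x := hinv.2 hx
  have hs1 : s (Fpq p q 1) = 1 := hinv.1 (right_mem_Icc.mpr zero_le_one)
  by_cases hX : x = Fpq p q 1
  · subst hX
    -- endpoint: s x = 1, show c x = 0 via slope squeeze
    have hd0 : HasDerivWithinAt s 0 (Icc 0 (Fpq p q 1)) (Fpq p q 1) := by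
      rw [hasDerivWithinAt_iff_tendsto_slope]
      set l := nhdsWithin (Fpq p q 1) (Icc 0 (Fpq p q 1) \ {Fpq p q 1}) with hl_def
      have hcw : Filter.Tendsto s l (nhds 1) := by
        have h0 := (hderiv _ (right_mem_Icc.mpr hF1.le)).continuousWithinAt
        rw [ContinuousWithinAt, hs1] at h0
        exact h0.mono_left (nhdsWithin_mono _ diff_subset)
      have hu : Filter.Tendsto (fun z => (1 - (s z) ^ q) ^ (1/p)) l (nhds 0) := by
        have h1 : Filter.Tendsto (fun z => 1 - (s z) ^ q) l (nhds 0) := by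
          have hc : ContinuousAt (fun w : ℝ => 1 - w ^ q) 1 :=
            continuousAt_const.sub (Real.continuousAt_rpow_const 1 q (Or.inl one_ne_zero))
          have h2 := hc.tendsto.comp hcw
          have h3 : (1:ℝ) - 1 ^ q = 0 := by rw [Real.one_rpow]; ring
          exact h3 ▸ h2
        have hc2 : ContinuousAt (fun z : ℝ => z ^ (1/p)) 0 :=
          Real.continuousAt_rpow_const 0 (1/p) (Or.inr (by positivity))
        have h2 := hc2.tendsto.comp h1
        have h3 : (0:ℝ) ^ (1/p) = 0 := Real.zero_rpow (by positivity)
        exact h3 ▸ h2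
      refine tendsto_of_tendsto_of_tendsto_of_le_of_le' tendsto_const_nhds hu ?_ ?_
      · filter_upwards [self_mem_nhdsWithin] with z hz
        obtain ⟨hz1, hz2⟩ := hz
        have hzlt : z < Fpq p q 1 := lt_of_le_of_ne hz1.2 (by simpa using hz2)
        rw [slope_def_field, hs1]
        exact div_nonneg_iff.mpr (Or.inr ⟨by linarith [(hmap hz1).2], by linarith⟩)
      · filter_upwards [self_mem_nhdsWithin] with z hz
        obtain ⟨hz1, hz2⟩ := hz
        have hzlt : z < Fpq p q 1 := lt_of_le_of_ne hz1.2 (by simpa using hz2)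
        have hw0 : 0 ≤ s z := (hmap hz1).1
        have hw1 : s z ≤ 1 := (hmap hz1).2
        have hFz : Fpq p q (s z) = z := hinv.2 hz1
        have hwlt : s z < 1 :=
          lt_of_le_of_ne hw1 (fun h => (ne_of_lt hzlt) (by rw [← hFz, h]))
        have hbase : 0 < 1 - (s z) ^ q := by
          have := Real.rpow_lt_one hw0 hwlt hq0; linarith
        have hmemw : s z ∈ uIcc (0:ℝ) 1 := by
          rw [uIcc_of_le zero_le_one]; exact ⟨hw0, hw1⟩
        have hsubw : IntervalIntegrable f volume 0 (s z) :=
          hint.mono_set (uIcc_subset_uIcc left_mem_uIcc hmemw)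
        have hsubw1 : IntervalIntegrable f volume (s z) 1 :=
          hint.mono_set (uIcc_subset_uIcc hmemw right_mem_uIcc)
        have hdiff : Fpq p q 1 - z = ∫ t in (s z)..1, f t := by
          conv_lhs => rw [← hFz]
          exact (integral_interval_sub_left hint hsubw)
        have hae : (fun _ : ℝ => (1 - (s z) ^ q) ^ (-(1/p)))
            ≤ᵐ[volume.restrict (Icc (s z) 1)] f := by
          have h1 : ∀ᵐ t : ℝ ∂volume, t ≠ 1 := by
            rw [ae_iff]; simp [Real.volume_singleton]
          filter_upwards [ae_restrict_mem measurableSet_Icc, ae_restrict_of_ae h1]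
            with t ht ht1
          have ht0 : (0:ℝ) ≤ t := le_trans hw0 ht.1
          have htlt : t < 1 := lt_of_le_of_ne ht.2 ht1
          have h2 : t ^ q < 1 := Real.rpow_lt_one ht0 htlt hq0
          have h3 : (s z) ^ q ≤ t ^ q := Real.rpow_le_rpow hw0 ht.1 hq0.le
          exact aux_anti hp0 (by linarith) (by linarith)
        have hmono := integral_mono_ae_restrict (μ := volume) hwlt.le
          intervalIntegrable_const hsubw1 hae
        rw [intervalIntegral.integral_const, smul_eq_mul] at hmono
        rw [← hdiff] at hmono
        have hK : 0 < (1 - (s z) ^ q) ^ (1/p) := Real.rpow_pos_of_pos hbase _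
        have hMK : (1 - (s z) ^ q) ^ (-(1/p)) = ((1 - (s z) ^ q) ^ (1/p))⁻¹ :=
          Real.rpow_neg hbase.le _
        rw [hMK] at hmono
        rw [slope_def_field, hs1]
        have hden : 0 < Fpq p q 1 - z := by linarith
        have heq : (s z - 1) / (z - Fpq p q 1) = (1 - s z) / (Fpq p q 1 - z) := by
          rw [div_eq_div_iff (by linarith) (by linarith)]; ring
        rw [heq, div_le_iff₀ hden]
        have h5 := mul_le_mul_of_nonneg_right hmono hK.le
        rw [mul_assoc, inv_mul_cancel₀ (ne_of_gt hK), mul_one] at h5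
        nlinarith [h5]
    have hcx : c (Fpq p q 1) = 0 :=
      (uniqueDiffOn_Icc hF1 _ hx).eq_deriv _ (hderiv _ hx) hd0
    rw [hs1, hcx]
    simp [Real.one_rpow, Real.zero_rpow (ne_of_gt hp0)]
  · -- interior: s x < 1
    have hslt : s x < 1 :=
      lt_of_le_of_ne hsx.2 (fun h => hX (by rw [← hFsx, h]))
    have hFd : HasDerivAt (Fpq p q) (f (s x)) (s x) := hF' (s x) hsx.1 hslt
    have hcomp : HasDerivWithinAt (Fpq p q ∘ s) (f (s x) * c x) (Icc 0 (Fpq p q 1)) x :=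
      hFd.comp_hasDerivWithinAt x (hderiv x hx)
    have hid : HasDerivWithinAt (fun z : ℝ => z) (f (s x) * c x) (Icc 0 (Fpq p q 1)) x :=
      hcomp.congr (fun z hz => (hinv.2 hz).symm) hFsx.symm
    have hid1 : HasDerivWithinAt (fun z : ℝ => z) 1 (Icc 0 (Fpq p q 1)) x :=
      (hasDerivAt_id x).hasDerivWithinAt
    have huniq : f (s x) * c x = 1 :=
      (uniqueDiffOn_Icc hF1 x hx).eq_deriv _ hid hid1
    have hbase : 0 < 1 - (s x) ^ q := by
      have : (s x) ^ q < 1 := Real.rpow_lt_one hsx.1 hslt hq0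
      linarith
    have hcx : c x = (1 - (s x) ^ q) ^ (1/p) := by
      have h0 : c x = (f (s x))⁻¹ := eq_inv_of_mul_eq_one_right huniq
      rw [h0, hf_def]
      simp only []
      rw [Real.rpow_neg hbase.le, inv_inv]
    have hq_abs : |s x| ^ q = (s x) ^ q := by rw [abs_of_nonneg hsx.1]
    have hp_abs : |c x| ^ p = 1 - (s x) ^ q := by
      rw [hcx, abs_of_nonneg (Real.rpow_nonneg hbase.le _), ← Real.rpow_mul hbase.le,
        one_div, inv_mul_cancel₀ (ne_of_gt hp0), Real.rpow_one]
    rw [hq_abs, hp_abs]; ring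
end

section
/- For the lemniscatic sine sl = sin_{2,4} and lemniscatic cosine cl = cos_{2,4}, the addition formula sl(x + y) = (sl(x)cl(y) + sl(y)cl(x)) / (1 + sl(x)² sl(y)²) holds for all x, y with x, y, x+y in [0, π_{2,4}/2]. -/
/-!
Fix `s = x + y` and consider `w ↦ (sl w · cl (s - w) + sl (s - w) · cl w) / (1 + sl w ² sl (s - w) ²)`.
Differentiating `F24 (sl t) = t` gives `cl = √(1 - sl⁴)` on `[0, π_{2,4}/2)`, hence the system
`sl' = cl`, `cl' = -2 sl³`, `cl² = 1 - sl⁴`, under which this function has derivative zero. Its values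
at `w = s` and `w = x` are `sl s` and the right-hand side of the addition formula.
-/

open MeasureTheory Set

noncomputable def F24 (x : ℝ) : ℝ := ∫ t in (0:ℝ)..x, (1 - t ^ 4) ^ (-(1/2 : ℝ))

lemma continuousOn_F24_integrand :
    ContinuousOn (fun t : ℝ ↦ (1 - t ^ 4) ^ (-(1/2 : ℝ))) (Ioo (-1) 1) := by
  intro t ht
  have ht2 : t ^ 2 < 1 := by nlinarith [ht.1, ht.2]
  have : t ^ 4 < 1 := by nlinarith
  exact ((continuous_const.sub (continuous_pow 4)).continuousAt.rpow_const
    (Or.inl (sub_ne_zero.2 this.ne'))).continuousWithinAt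

lemma F24_hasDerivAt {s : ℝ} (hs : s ∈ Ioo (-1) 1) :
    HasDerivAt F24 ((1 - s ^ 4) ^ (-(1/2 : ℝ))) s := by
  have hsub : uIcc 0 s ⊆ Ioo (-1) 1 := ordConnected_Ioo.uIcc_subset ⟨by norm_num, by norm_num⟩ hs
  exact intervalIntegral.integral_hasDerivAt_right
    ((continuousOn_F24_integrand.mono hsub).intervalIntegrable)
    (continuousOn_F24_integrand.stronglyMeasurableAtFilter isOpen_Ioo _ hs)
    (continuousOn_F24_integrand.continuousAt (isOpen_Ioo.mem_nhds hs))

lemma F24_zero : F24 0 = 0 := intervalIntegral.integral_same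

-- Injectivity replaces a proof that the improper integral `F24 1` is integrable.
lemma F24_one_pos (h : InjOn F24 (Icc 0 1)) : 0 < F24 1 := by
  have hnonneg : 0 ≤ F24 1 := intervalIntegral.integral_nonneg zero_le_one
    fun t ht ↦ Real.rpow_nonneg (by nlinarith [pow_le_one₀ ht.1 ht.2 (n := 4)]) _
  refine hnonneg.lt_of_ne fun h1 ↦ ?_
  have := h ⟨le_rfl, zero_le_one⟩ ⟨zero_le_one, le_rfl⟩ (F24_zero.trans h1)
  norm_num at this

lemma eq_of_continuousOn_of_hasDerivAt_zero {f : ℝ → ℝ} {a b : ℝ} (hab : a ≤ b)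
    (hf : ContinuousOn f (Icc a b)) (hf' : ∀ t ∈ Ioo a b, HasDerivAt f 0 t) : f b = f a := by
  rcases hab.eq_or_lt with rfl | hlt
  · rfl
  obtain ⟨c, -, hc⟩ := exists_hasDerivAt_eq_slope f (fun _ ↦ 0) hlt hf hf'
  rw [eq_div_iff (sub_ne_zero.2 hlt.ne')] at hc
  linarith

noncomputable def lemniscateAdd (S C : ℝ → ℝ) (x y : ℝ) : ℝ :=
  (S x * C y + S y * C x) / (1 + S x ^ 2 * S y ^ 2)

def LemniscaticAt (S C : ℝ → ℝ) (t : ℝ) : Prop :=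
  HasDerivAt S (C t) t ∧ HasDerivAt C (-2 * S t ^ 3) t ∧ C t ^ 2 = 1 - S t ^ 4

lemma lemniscaticAt_of_hasDerivAt {S : ℝ → ℝ} {t : ℝ} (hS : HasDerivAt S √(1 - S t ^ 4) t)
    (ht : S t ^ 4 < 1) : LemniscaticAt S (fun w ↦ √(1 - S w ^ 4)) t := by
  have hpos : 0 < 1 - S t ^ 4 := by linarith
  refine ⟨hS, ?_, Real.sq_sqrt hpos.le⟩
  have hsqrt : 0 < √(1 - S t ^ 4) := Real.sqrt_pos.2 hpos
  have hinner : HasDerivAt (fun w ↦ 1 - S w ^ 4) (-(4 * S t ^ 3 * √(1 - S t ^ 4))) t := by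
    simpa using (hS.pow 4).const_sub 1
  convert hinner.sqrt hpos.ne' using 1
  field_simp
  ring

lemma hasDerivAt_lemniscateAdd_sub {S C : ℝ → ℝ} {s t : ℝ} (ht : LemniscaticAt S C t)
    (hst : LemniscaticAt S C (s - t)) :
    HasDerivAt (fun w ↦ lemniscateAdd S C w (s - w)) 0 t := by
  obtain ⟨hS, hC, hSC⟩ := ht
  obtain ⟨hS', hC', hSC'⟩ := hst
  have hsub : HasDerivAt (fun w ↦ s - w) (-1) t := (hasDerivAt_id t).const_sub s
  have hS' := hS'.comp t hsub
  have hC' := hC'.comp t hsub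
  have hden : 1 + S t ^ 2 * S (s - t) ^ 2 ≠ 0 := by positivity
  refine (((hS.mul hC').add (hS'.mul hC)).div
    ((hasDerivAt_const t 1).add ((hS.pow 2).mul (hS'.pow 2))) hden).congr_deriv ?_
  simp only [Pi.add_apply, Pi.mul_apply, Pi.pow_apply, Function.comp_apply, div_eq_zero_iff]
  left
  linear_combination (-(2 * S t * S (s - t) ^ 3)) * hSC + (2 * S t ^ 3 * S (s - t)) * hSC'

lemma continuousOn_lemniscateAdd_sub {S C : ℝ → ℝ} {s : ℝ} (hS : ContinuousOn S (Icc 0 s))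
    (hC : ContinuousOn C (Icc 0 s)) :
    ContinuousOn (fun w ↦ lemniscateAdd S C w (s - w)) (Icc 0 s) := by
  have hmaps : MapsTo (fun w ↦ s - w) (Icc 0 s) (Icc 0 s) :=
    fun w hw ↦ ⟨by linarith [hw.2], by linarith [hw.1]⟩
  have hsub : ContinuousOn (fun w ↦ s - w) (Icc 0 s) := by fun_prop
  have hS' := hS.comp hsub hmaps
  have hC' := hC.comp hsub hmaps
  refine ((hS.mul hC').add (hS'.mul hC)).div (continuousOn_const.add ((hS.pow 2).mul (hS'.pow 2)))
    fun w _ ↦ ?_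
  positivity

theorem lemniscateAdd_eq {S C : ℝ → ℝ} {x y : ℝ} (hx : 0 ≤ x) (hy : 0 ≤ y)
    (hS : ContinuousOn S (Icc 0 (x + y))) (hC : ContinuousOn C (Icc 0 (x + y)))
    (hSC : ∀ t ∈ Ioo 0 (x + y), LemniscaticAt S C t) (hS0 : S 0 = 0) (hC0 : C 0 = 1) :
    S (x + y) = lemniscateAdd S C x y := by
  have hconst := eq_of_continuousOn_of_hasDerivAt_zero (by linarith)
    ((continuousOn_lemniscateAdd_sub hS hC).mono (Icc_subset_Icc_left hx))
    fun t ht ↦ hasDerivAt_lemniscateAdd_sub (hSC t ⟨hx.trans_lt ht.1, ht.2⟩)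
      (hSC _ ⟨by linarith [ht.2], by linarith [ht.1]⟩)
  simpa [lemniscateAdd, hS0, hC0] using hconst

section

variable {sl cl : ℝ → ℝ}

lemma sl_lt_one (hmap : MapsTo sl (Icc 0 (F24 1)) (Icc 0 1))
    (hinv : RightInvOn sl F24 (Icc 0 (F24 1))) {t : ℝ} (ht : t ∈ Icc 0 (F24 1))
    (htL : t < F24 1) : sl t < 1 :=
  (hmap ht).2.lt_of_ne fun h ↦ htL.ne (by rw [← hinv ht, h])

lemma cl_eq_sqrt (hmap : MapsTo sl (Icc 0 (F24 1)) (Icc 0 1))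
    (hinv : InvOn sl F24 (Icc 0 1) (Icc 0 (F24 1)))
    (hderiv : ∀ x ∈ Icc 0 (F24 1), HasDerivWithinAt sl (cl x) (Icc 0 (F24 1)) x)
    {t : ℝ} (ht : t ∈ Icc 0 (F24 1)) (htL : t < F24 1) : cl t = √(1 - sl t ^ 4) := by
  have hsl := sl_lt_one hmap hinv.2 ht htL
  have hpos : 0 < 1 - sl t ^ 4 := by nlinarith [pow_lt_one₀ (hmap ht).1 hsl (n := 4) four_ne_zero]
  have hcomp := (F24_hasDerivAt ⟨by linarith [(hmap ht).1], hsl⟩).comp_hasDerivWithinAt t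
    (hderiv t ht)
  have hid : (1 - sl t ^ 4) ^ (-(1/2 : ℝ)) * cl t = 1 :=
    (uniqueDiffOn_Icc (F24_one_pos hinv.1.injOn) t ht).eq_deriv _
      (hcomp.congr (fun u hu ↦ (hinv.2 hu).symm) (hinv.2 ht).symm) (hasDerivWithinAt_id t _)
  rw [Real.rpow_neg hpos.le, ← Real.sqrt_eq_rpow] at hid
  field_simp at hid
  exact hid

lemma lemniscaticAt_sl (hmap : MapsTo sl (Icc 0 (F24 1)) (Icc 0 1))
    (hinv : InvOn sl F24 (Icc 0 1) (Icc 0 (F24 1)))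
    (hderiv : ∀ x ∈ Icc 0 (F24 1), HasDerivWithinAt sl (cl x) (Icc 0 (F24 1)) x)
    {t : ℝ} (ht : t ∈ Ioo 0 (F24 1)) : LemniscaticAt sl (fun w ↦ √(1 - sl w ^ 4)) t := by
  have ht' := Ioo_subset_Icc_self ht
  refine lemniscaticAt_of_hasDerivAt ?_
    (pow_lt_one₀ (hmap ht').1 (sl_lt_one hmap hinv.2 ht' ht.2) four_ne_zero)
  rw [← cl_eq_sqrt hmap hinv hderiv ht' ht.2]
  exact (hderiv t ht').hasDerivAt (Icc_mem_nhds ht.1 ht.2)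

end

/-- the lemniscatic addition formula
`sl(x+y) = (sl x · cl y + sl y · cl x) / (1 + sl x ² sl y ²)` for `x, y, x+y ∈ [0, π_{2,4}/2]`,
where `sl = sin_{2,4}` is the inverse of `F_{2,4}` and `cl = cos_{2,4}` its derivative. -/
theorem stmt_4 (sl cl : ℝ → ℝ)
    (hmap : MapsTo sl (Icc 0 (F24 1)) (Icc 0 1))
    (hinv : InvOn sl F24 (Icc 0 1) (Icc 0 (F24 1)))
    (hderiv : ∀ x ∈ Icc 0 (F24 1), HasDerivWithinAt sl (cl x) (Icc 0 (F24 1)) x) :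
    ∀ x ∈ Icc 0 (F24 1), ∀ y ∈ Icc 0 (F24 1), x + y ∈ Icc 0 (F24 1) →
      sl (x + y) = (sl x * cl y + sl y * cl x) / (1 + (sl x) ^ 2 * (sl y) ^ 2) := by
  intro x hx y hy hxy
  have hL := F24_one_pos hinv.1.injOn
  have hsl0 : sl 0 = 0 := by simpa [F24_zero] using hinv.1 ⟨le_rfl, zero_le_one⟩
  have hcl0 : cl 0 = 1 := by simp [cl_eq_sqrt hmap hinv hderiv ⟨le_rfl, hL.le⟩ hL, hsl0]
  -- `cl = √(1 - sl⁴)` is only known below `F24 1`, so a zero summand is treated apart.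
  rcases hx.1.eq_or_lt with rfl | hx0
  · simp [hsl0, hcl0]
  rcases hy.1.eq_or_lt with rfl | hy0
  · simp [hsl0, hcl0]
  have hsub : Icc 0 (x + y) ⊆ Icc 0 (F24 1) := Icc_subset_Icc_right hxy.2
  have hcont : ContinuousOn sl (Icc 0 (x + y)) :=
    fun t ht ↦ (hderiv t (hsub ht)).continuousWithinAt.mono hsub
  rw [lemniscateAdd_eq (C := fun w ↦ √(1 - sl w ^ 4)) hx.1 hy.1 hcont
      (continuousOn_const.sub (hcont.pow 4)).sqrt
      (fun t ht ↦ lemniscaticAt_sl hmap hinv hderiv ⟨ht.1, ht.2.trans_le hxy.2⟩) hsl0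
      (by simp [hsl0]),
    lemniscateAdd, cl_eq_sqrt hmap hinv hderiv hx (by linarith [hxy.2]),
    cl_eq_sqrt hmap hinv hderiv hy (by linarith [hxy.2])]
end

section
/- Let α ≥ 1 and let (x, y, u, v) be a solution of x' = u, y' = v₀|x|^{2α}, u' = -αv₀²|x|^{2(α-1)}x, v = v₀ with v₀ ≠ 0, given by x(t) = A sin_α(ωt + φ), u(t) = Aω cos_α(ωt + φ) with ω² = v₀² A^{2(α-1)}. Then y(t) = y₀ + v₀ A^{2α}/((α+1)ω²) · (ω²t + ω cos_α(φ)sin_α(φ) − ω cos_α(ωt+φ) sin_α(ωt+φ)). -/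
/-!
Since `sin_α' = cos_α` and `cos_α' = -α |sin_α|^{2α-2} sin_α`, the Pythagorean identity
`|sin_α|^{2α} + cos_α² = 1` gives `(cos_α sin_α)' = cos_α² - α |sin_α|^{2α} = 1 - (α + 1) |sin_α|^{2α}`.
Hence `|sin_α|^{2α} = (1 - (cos_α sin_α)') / (α + 1)` has an explicit primitive, and integrating
`y' = v₀ A^{2α} |sin_α(ωt + φ)|^{2α}` from `0` gives the formula.
-/

open Real

lemma abs_rpow_two_mul_sub_two_mul_sq {α : ℝ} (hα : α ≠ 0) (x : ℝ) :
    |x| ^ (2 * α - 2) * x ^ 2 = (x ^ 2) ^ α := by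
  rcases eq_or_ne x 0 with rfl | hx
  · simp [zero_rpow hα]
  have hx' : 0 < |x| := abs_pos.mpr hx
  rw [← sq_abs x, ← rpow_natCast, ← rpow_add hx', ← rpow_mul hx'.le]
  norm_num

lemma eq_of_hasDerivAt_eq {f g f' : ℝ → ℝ} (hf : ∀ t, HasDerivAt f (f' t) t)
    (hg : ∀ t, HasDerivAt g (f' t) t) (a : ℝ) (hfga : f a = g a) : f = g := by
  have hfg (t : ℝ) : HasDerivAt (f - g) 0 t := by simpa using (hf t).sub (hg t)
  funext t
  have := is_const_of_deriv_eq_zero (fun t => (hfg t).differentiableAt) (fun t => (hfg t).deriv) t a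
  simp only [Pi.sub_apply] at this
  linarith

lemma hasDerivAt_genCos_mul_genSin {α : ℝ} (hα : α ≠ 0) {s c : ℝ → ℝ}
    (hs : ∀ t, HasDerivAt s (c t) t)
    (hc : ∀ t, HasDerivAt c (-α * |s t| ^ (2 * α - 2) * s t) t)
    (hpyth : ∀ t, ((s t) ^ 2) ^ α + (c t) ^ 2 = 1) (t : ℝ) :
    HasDerivAt (fun t => c t * s t) (1 - (α + 1) * ((s t) ^ 2) ^ α) t := by
  refine ((hc t).mul (hs t)).congr_deriv ?_
  linear_combination hpyth t - α * abs_rpow_two_mul_sub_two_mul_sq hα (s t)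

theorem stmt_7_general (α : ℝ) (hα : 1 ≤ α) (s c : ℝ → ℝ)
    (hs : ∀ t, HasDerivAt s (c t) t)
    (hc : ∀ t, HasDerivAt c (-α * |s t| ^ (2 * α - 2) * s t) t)
    (hpyth : ∀ t, ((s t) ^ 2) ^ α + (c t) ^ 2 = 1)
    (A ω φ v₀ y₀ : ℝ) (hω : ω ≠ 0)
    (y : ℝ → ℝ) (hy0 : y 0 = y₀)
    (hy : ∀ t, HasDerivAt y (v₀ * ((A * s (ω * t + φ)) ^ 2) ^ α) t) :
    ∀ t, y t = y₀ + v₀ * (A ^ 2) ^ α / ((α + 1) * ω ^ 2) *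
      (ω ^ 2 * t + ω * c φ * s φ - ω * c (ω * t + φ) * s (ω * t + φ)) := by
  have hα₁ : α + 1 ≠ 0 := by linarith
  have hcs := hasDerivAt_genCos_mul_genSin (by linarith) hs hc hpyth
  have hphase (t : ℝ) : HasDerivAt (fun t => ω * t + φ) ω t := by
    simpa using ((hasDerivAt_id t).const_mul ω).add_const φ
  have hprimitive (t : ℝ) : HasDerivAt (fun t => y₀ + v₀ * (A ^ 2) ^ α / ((α + 1) * ω ^ 2) *
      (ω ^ 2 * t + ω * c φ * s φ - ω * c (ω * t + φ) * s (ω * t + φ)))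
      (v₀ * ((A * s (ω * t + φ)) ^ 2) ^ α) t := by
    have hcs_comp := (hcs (ω * t + φ)).comp t (hphase t)
    simp only [Function.comp_def] at hcs_comp
    have h := ((((hasDerivAt_id t).const_mul (ω ^ 2)).add_const (ω * c φ * s φ)).sub
      (hcs_comp.const_mul ω)).const_mul (v₀ * (A ^ 2) ^ α / ((α + 1) * ω ^ 2)) |>.const_add y₀
    refine (h.congr_of_eventuallyEq (.of_forall fun x => ?_)).congr_deriv ?_
    · simp only [Pi.sub_apply, id]
      ring
    · rw [mul_pow, mul_rpow (sq_nonneg A) (sq_nonneg _)]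
      field_simp
      ring
  intro t
  exact congrFun (eq_of_hasDerivAt_eq hy hprimitive 0 (by simp [hy0])) t

/-- the vertical coordinate of a geodesic of the `α`-Grushin plane.  Given the
generalized trigonometric functions `s = sin_α`, `c = cos_α` (with `s' = c`,
`c' = -α|s|^{2α-2}s` and `|s|^{2α} + c² = 1`), parameters `A > 0`, `ω ≠ 0` with
`ω² = v₀² A^{2(α-1)}`, and `y` solving `y' = v₀ ((A s(ωt+φ))²)^α` with `y(0) = y₀`, one has the
stated closed formula for `y(t)`. -/
theorem stmt_7 (α : ℝ) (hα : 1 ≤ α) (s c : ℝ → ℝ)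
    (hs : ∀ t, HasDerivAt s (c t) t)
    (hc : ∀ t, HasDerivAt c (-α * |s t| ^ (2 * α - 2) * s t) t)
    (hpyth : ∀ t, ((s t) ^ 2) ^ α + (c t) ^ 2 = 1)
    (A ω φ v₀ y₀ : ℝ) (hA : 0 < A) (hω : ω ≠ 0) (hv₀ : v₀ ≠ 0)
    (hrel : ω ^ 2 = v₀ ^ 2 * (A ^ 2) ^ (α - 1))
    (y : ℝ → ℝ) (hy0 : y 0 = y₀)
    (hy : ∀ t, HasDerivAt y (v₀ * ((A * s (ω * t + φ)) ^ 2) ^ α) t) :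
    ∀ t, y t = y₀ + v₀ * (A ^ 2) ^ α / ((α + 1) * ω ^ 2) *
      (ω ^ 2 * t + ω * c φ * s φ - ω * c (ω * t + φ) * s (ω * t + φ)) :=
  stmt_7_general α hα s c hs hc hpyth A ω φ v₀ y₀ hω y hy0 hy
end

section
/- Let α ≥ 1. For each α, the equation (m+1)^{2α}(m+1) − ((2α+1)m + 1) = 0 has a unique nonzero real solution m in the interval [−3, −2), and m = −3 when α = 1. -/
open Set

/-!
Substituting `s = -(m + 1)`, which maps `[-3, -2)` onto `(1, 2]`, turns the equation into
`s ^ p - p * s = p - 1` with `p = 2α + 1`. The left side is strictly increasing for `s ≥ 1`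
(its derivative is `p (s ^ (p - 1) - 1)`), lies below `p - 1` at `s = 1`, and reaches it by
`s = 2` because Bernoulli's inequality gives `2 ^ p = 2 * 4 ^ α ≥ 2 + 6α`, with equality at `α = 1`.
-/

lemma strictMonoOn_rpow_sub_mul_self {p : ℝ} (hp : 1 < p) :
    StrictMonoOn (fun s : ℝ => s ^ p - p * s) (Ici 1) := by
  have hderiv : ∀ x : ℝ, 0 < x →
      HasDerivAt (fun s : ℝ => s ^ p - p * s) (p * x ^ (p - 1) - p) x := fun x hx =>
    (Real.hasDerivAt_rpow_const (Or.inl hx.ne')).sub (by simpa using (hasDerivAt_id x).const_mul p)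
  refine strictMonoOn_of_deriv_pos (convex_Ici 1)
    (fun x hx => (hderiv x (by linarith [mem_Ici.1 hx])).continuousAt.continuousWithinAt) ?_
  intro x hx
  rw [interior_Ici, mem_Ioi] at hx
  rw [(hderiv x (by linarith)).deriv]
  have : 1 < x ^ (p - 1) := Real.one_lt_rpow hx (by linarith)
  nlinarith

lemma exists_rpow_sub_mul_self_eq {α : ℝ} (hα : 1 ≤ α) :
    ∃ s ∈ Ioc (1 : ℝ) 2, s ^ (2 * α + 1) - (2 * α + 1) * s = 2 * α := by
  have hcont : ContinuousOn (fun s : ℝ => s ^ (2 * α + 1) - (2 * α + 1) * s) (Icc 1 2) :=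
    ((continuousOn_id.rpow_const fun _ _ => Or.inr (by linarith)).sub
      (continuousOn_const.mul continuousOn_id))
  have hpow_two : (2 : ℝ) ^ (2 * α + 1) = 2 * 4 ^ α := by
    rw [Real.rpow_add_one two_ne_zero, Real.rpow_mul zero_le_two]
    norm_num
    ring
  have hbernoulli : 1 + α * 3 ≤ (1 + 3 : ℝ) ^ α :=
    one_add_mul_self_le_rpow_one_add (by norm_num) hα
  refine intermediate_value_Ioc one_le_two hcont ⟨?_, ?_⟩
  · simp only [Real.one_rpow]
    linarith
  · simp only [hpow_two]
    norm_num at hbernoulli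
    linarith

lemma sq_rpow_mul_sub_eq_zero_iff (α : ℝ) {m : ℝ} (hm : m < -1) :
    ((m + 1) ^ 2) ^ α * (m + 1) - ((2 * α + 1) * m + 1) = 0 ↔
      (-(m + 1)) ^ (2 * α + 1) - (2 * α + 1) * (-(m + 1)) = 2 * α := by
  have hs : 0 < -(m + 1) := by linarith
  have hpow : ((m + 1) ^ 2) ^ α * (m + 1) = -(-(m + 1)) ^ (2 * α + 1) := by
    rw [← neg_sq, ← Real.rpow_natCast, ← Real.rpow_mul hs.le, Real.rpow_add_one hs.ne']
    push_cast
    ring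
  rw [hpow]
  constructor <;> intro h <;> linarith

/-- for `α ≥ 1`, the equation `(m+1)^{2α}(m+1) − ((2α+1)m + 1) = 0` has a unique
nonzero solution `m ∈ [−3, −2)`, and `m = −3` when `α = 1`.  Here `(m+1)^{2α} = ((m+1)²)^α`. -/
theorem stmt_9 (α : ℝ) (hα : 1 ≤ α) :
    (∃! m : ℝ, m ∈ Ico (-3 : ℝ) (-2) ∧ m ≠ 0 ∧
      ((m + 1) ^ 2) ^ α * (m + 1) - ((2 * α + 1) * m + 1) = 0) ∧
    (α = 1 → ∀ m : ℝ, m ∈ Ico (-3 : ℝ) (-2) → m ≠ 0 →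
      ((m + 1) ^ 2) ^ α * (m + 1) - ((2 * α + 1) * m + 1) = 0 → m = -3) := by
  have hinj := (strictMonoOn_rpow_sub_mul_self (p := 2 * α + 1) (by linarith)).injOn
  have hshift : ∀ m ∈ Ico (-3 : ℝ) (-2), -(m + 1) ∈ Ici (1 : ℝ) := fun m hm => by
    rw [mem_Ici]; linarith [hm.2]
  obtain ⟨s, hs, hroot⟩ := exists_rpow_sub_mul_self_eq hα
  refine ⟨⟨-1 - s, ⟨⟨by linarith [hs.2], by linarith [hs.1]⟩, by linarith [hs.1], ?_⟩, ?_⟩, ?_⟩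
  · rw [sq_rpow_mul_sub_eq_zero_iff α (by linarith [hs.1]), show -(-1 - s + 1) = s by ring, hroot]
  · rintro m ⟨hm, -, hfm⟩
    rw [sq_rpow_mul_sub_eq_zero_iff α (by linarith [hm.2])] at hfm
    have : -(m + 1) = s := hinj (hshift m hm) (mem_Ici.2 hs.1.le) (hfm.trans hroot.symm)
    linarith
  · rintro rfl m hm - hfm
    rw [sq_rpow_mul_sub_eq_zero_iff 1 (by linarith [hm.2])] at hfm
    have hroot_two : (2 : ℝ) ^ (2 * 1 + 1 : ℝ) - (2 * 1 + 1) * 2 = 2 * 1 := by norm_num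
    have : -(m + 1) = 2 := hinj (hshift m hm) (mem_Ici.2 one_le_two) (hfm.trans hroot_two.symm)
    linarith
end

section
/- Let α ≥ 1 and x₀, u₀ ∈ ℝ with u₀ ≠ 0, and let m ∈ [−3, −2) be the unique nonzero solution of (m+1)^{2α}(m+1) = (2α+1)m + 1 (m = −3 if α = 1), and set N = 2((α+1)m + 1)/(m+1). Then for all t ∈ (0, 1]: t · ((u₀t + x₀)^{2α}(u₀t + x₀) − x₀^{2α}x₀) / ((u₀ + x₀)^{2α}(u₀ + x₀) − x₀^{2α}x₀) ≥ t^N, whenever the denominator is nonzero. -/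
/-!
Write `F z = (z²)^α z` (odd, increasing, `F' z = (2α+1)(z²)^α`), `c = -(m+1)` and `K = (c²)^α`.
The equation for `m` says `F c = (2α+1)c + 2α` and turns the exponent into `N = K + 1`, so the
claim is `g t ≥ t^K g 1` for `g τ = F(u₀τ + x₀) - F x₀` (after reflecting, `u₀ > 0`). That
follows from `τ g' τ ≤ K g τ`, which makes `g τ · τ^(-K)` antitone on `(0, 1]`. By the
multiplicativity of `F`, this differential inequality reduces to `(2α+1)(1 - v) ≤ K(1 - F v)` for
`v ≤ 1`. The difference of the two sides decreases on `v ≤ -1/c`, increases on `[-1/c, 1/c]` and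
decreases on `v ≥ 1/c`; it vanishes at `v = 1`, and at `v = -1/c` it equals
`(F c - (2α+1)c - 2α)/c = 0`.
-/

open Real Set

lemma rpow_mul_le_of_mul_deriv_le {g g' : ℝ → ℝ} {K t : ℝ} (ht₀ : 0 < t) (ht₁ : t ≤ 1)
    (hg : ∀ τ ∈ Icc t 1, HasDerivAt g (g' τ) τ) (hle : ∀ τ ∈ Icc t 1, τ * g' τ ≤ K * g τ) :
    t ^ K * g 1 ≤ g t := by
  set H : ℝ → ℝ := fun τ => g τ * τ ^ (-K)
  have hH : ∀ τ ∈ Icc t 1, HasDerivAt H (τ ^ (-K - 1) * (τ * g' τ - K * g τ)) τ := by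
    intro τ hτ
    have hτ₀ : τ ≠ 0 := (ht₀.trans_le hτ.1).ne'
    refine ((hg τ hτ).mul (hasDerivAt_rpow_const (Or.inl hτ₀))).congr_deriv ?_
    rw [rpow_sub_one hτ₀]
    field_simp
    ring
  have hanti : AntitoneOn H (Icc t 1) :=
    antitoneOn_of_hasDerivWithinAt_nonpos (convex_Icc t 1)
      (fun τ hτ => (hH τ hτ).continuousAt.continuousWithinAt)
      (fun τ hτ => (hH τ (interior_subset hτ)).hasDerivWithinAt) fun τ hτ => by
        rw [interior_Icc] at hτ
        exact mul_nonpos_of_nonneg_of_nonpos (rpow_nonneg (ht₀.trans hτ.1).le _)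
          (sub_nonpos.2 (hle τ (Ioo_subset_Icc_self hτ)))
  have hH₁ : g 1 ≤ g t * t ^ (-K) := by
    simpa [H] using hanti ⟨le_rfl, ht₁⟩ ⟨ht₁, le_rfl⟩ ht₁
  calc t ^ K * g 1 ≤ t ^ K * (g t * t ^ (-K)) :=
        mul_le_mul_of_nonneg_left hH₁ (rpow_nonneg ht₀.le K)
    _ = g t := by rw [rpow_neg ht₀.le]; field_simp

noncomputable def oddPow (α z : ℝ) : ℝ := (z ^ 2) ^ α * z

section oddPow

variable {α : ℝ}

lemma oddPow_neg (z : ℝ) : oddPow α (-z) = -oddPow α z := by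
  simp [oddPow]

lemma oddPow_one : oddPow α 1 = 1 := by
  simp [oddPow]

lemma oddPow_mul (x y : ℝ) : oddPow α (x * y) = oddPow α x * oddPow α y := by
  simp only [oddPow, mul_pow, mul_rpow (sq_nonneg x) (sq_nonneg y)]
  ring

lemma oddPow_nonneg {z : ℝ} (hz : 0 ≤ z) : 0 ≤ oddPow α z :=
  mul_nonneg (rpow_nonneg (sq_nonneg z) α) hz

lemma oddPow_strictMono (hα : 0 ≤ α) : StrictMono (oddPow α) := by
  refine strictMono_of_odd_strictMonoOn_nonneg oddPow_neg fun x hx y _ hxy => ?_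
  have hy : 0 < y := (mem_Ici.mp hx).trans_lt hxy
  calc (x ^ 2) ^ α * x ≤ (y ^ 2) ^ α * x := by gcongr
    _ < (y ^ 2) ^ α * y := by gcongr

lemma hasDerivAt_oddPow (hα : 1 ≤ α) (z : ℝ) :
    HasDerivAt (oddPow α) ((2 * α + 1) * (z ^ 2) ^ α) z := by
  have hsq : HasDerivAt (fun z : ℝ => (z ^ 2) ^ α) (2 * z * α * (z ^ 2) ^ (α - 1)) z := by
    simpa using (hasDerivAt_pow 2 z).rpow_const (p := α) (Or.inr hα)
  have hpow : (z ^ 2) ^ (α - 1) * z ^ 2 = (z ^ 2) ^ α := by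
    rw [← rpow_add_one' (sq_nonneg z) (by linarith)]; simp
  exact (hsq.mul (hasDerivAt_id' z)).congr_deriv (by linear_combination 2 * α * hpow)

end oddPow

-- `(1 - v) * (K * slope of the chord of oddPow α over [v, 1] - deriv (oddPow α) 1)`
noncomputable def chordDefect (α c v : ℝ) : ℝ :=
  (c ^ 2) ^ α * (1 - oddPow α v) - (2 * α + 1) * (1 - v)

lemma chordDefect_one (α c : ℝ) : chordDefect α c 1 = 0 := by
  simp [chordDefect, oddPow_one]

lemma chordDefect_neg_inv {α c : ℝ} (hc : 0 < c) :
    chordDefect α c (-c⁻¹) = (oddPow α c - (2 * α + 1) * c - 2 * α) / c := by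
  have hinv : oddPow α c * oddPow α c⁻¹ = 1 := by
    rw [← oddPow_mul, mul_inv_cancel₀ hc.ne', oddPow_one]
  rw [chordDefect, oddPow_neg]
  rw [show oddPow α c = (c ^ 2) ^ α * c from rfl] at hinv ⊢
  generalize oddPow α c⁻¹ = a at hinv ⊢
  field_simp
  linear_combination hinv

section chordDefect

variable {α : ℝ} (hα : 1 ≤ α) (c : ℝ)
include hα

lemma hasDerivAt_chordDefect (v : ℝ) :
    HasDerivAt (chordDefect α c) ((2 * α + 1) * (1 - ((c * v) ^ 2) ^ α)) v := by
  have h := (((hasDerivAt_oddPow hα v).const_sub 1).const_mul ((c ^ 2) ^ α)).sub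
    (((hasDerivAt_id' v).const_sub 1).const_mul (2 * α + 1))
  refine h.congr_deriv ?_
  rw [mul_pow, mul_rpow (sq_nonneg c) (sq_nonneg v)]
  ring

lemma continuous_chordDefect : Continuous (chordDefect α c) :=
  continuous_iff_continuousAt.2 fun v => (hasDerivAt_chordDefect hα c v).continuousAt

lemma antitoneOn_chordDefect (hc : 0 < c) {s : Set ℝ} (hs : Convex ℝ s)
    (h : ∀ v ∈ s, c⁻¹ ≤ |v|) : AntitoneOn (chordDefect α c) s :=
  antitoneOn_of_hasDerivWithinAt_nonpos hs (continuous_chordDefect hα c).continuousOn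
    (fun v _ => (hasDerivAt_chordDefect hα c v).hasDerivWithinAt) fun v hv => by
      have hcv : 1 ≤ c * |v| := by
        simpa [hc.ne'] using mul_le_mul_of_nonneg_left (h v (interior_subset hv)) hc.le
      have : 1 ≤ ((c * v) ^ 2) ^ α := by
        rw [← sq_abs, abs_mul, abs_of_pos hc]
        exact one_le_rpow (one_le_pow₀ hcv) (by linarith)
      nlinarith

lemma monotoneOn_chordDefect (hc : 0 < c) {s : Set ℝ} (hs : Convex ℝ s)
    (h : ∀ v ∈ s, |v| ≤ c⁻¹) : MonotoneOn (chordDefect α c) s :=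
  monotoneOn_of_hasDerivWithinAt_nonneg hs (continuous_chordDefect hα c).continuousOn
    (fun v _ => (hasDerivAt_chordDefect hα c v).hasDerivWithinAt) fun v hv => by
      have hcv : c * |v| ≤ 1 := by
        simpa [hc.ne'] using mul_le_mul_of_nonneg_left (h v (interior_subset hv)) hc.le
      have : ((c * v) ^ 2) ^ α ≤ 1 := by
        rw [← sq_abs, abs_mul, abs_of_pos hc]
        exact rpow_le_one (sq_nonneg _) (pow_le_one₀ (by positivity) hcv) (by linarith)
      nlinarith

end chordDefect

section chordBound

variable {α c : ℝ} (hα : 1 ≤ α) (hc : 0 < c) (hF : (2 * α + 1) * c + 2 * α ≤ oddPow α c)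
include hα hc hF

lemma chordDefect_nonneg {v : ℝ} (hv : v ≤ 1) : 0 ≤ chordDefect α c v := by
  have hmin : 0 ≤ chordDefect α c (-c⁻¹) := by
    rw [chordDefect_neg_inv hc]
    exact div_nonneg (by linarith) hc.le
  rcases le_total v (-c⁻¹) with hv₁ | hv₁
  · exact hmin.trans (antitoneOn_chordDefect hα c hc (convex_Iic _)
      (fun w hw => le_abs.2 (Or.inr (le_neg.1 hw))) hv₁ self_mem_Iic hv₁)
  rcases le_total v c⁻¹ with hv₂ | hv₂
  · exact hmin.trans (monotoneOn_chordDefect hα c hc (convex_Icc _ _)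
      (fun w hw => abs_le.2 hw) (left_mem_Icc.2 (by linarith)) ⟨hv₁, hv₂⟩ hv₁)
  · exact (chordDefect_one α c).symm.le.trans (antitoneOn_chordDefect hα c hc (convex_Ici _)
      (fun w hw => le_abs.2 (Or.inl hw)) hv₂ (hv₂.trans hv) hv)

lemma mul_sub_le_oddPow_sub_of_pos {x y : ℝ} (hxy : x ≤ y) (hy : 0 < y) :
    (2 * α + 1) * (y - x) * (y ^ 2) ^ α ≤ (c ^ 2) ^ α * (oddPow α y - oddPow α x) := by
  have hv := sub_nonneg.2 (chordDefect_nonneg hα hc hF ((div_le_one hy).2 hxy))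
  rw [chordDefect, sub_zero] at hv
  have hx : oddPow α x = oddPow α y * oddPow α (x / y) := by
    rw [← oddPow_mul, mul_div_cancel₀ _ hy.ne']
  calc (2 * α + 1) * (y - x) * (y ^ 2) ^ α = (2 * α + 1) * (1 - x / y) * oddPow α y := by
        rw [oddPow]; field_simp
    _ ≤ (c ^ 2) ^ α * (1 - oddPow α (x / y)) * oddPow α y :=
        mul_le_mul_of_nonneg_right (by linarith) (oddPow_nonneg hy.le)
    _ = (c ^ 2) ^ α * (oddPow α y - oddPow α x) := by rw [hx]; ring

lemma mul_sub_le_oddPow_sub {x y : ℝ} (hxy : x ≤ y) :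
    (2 * α + 1) * (y - x) * (y ^ 2) ^ α ≤ (c ^ 2) ^ α * (oddPow α y - oddPow α x) := by
  rcases lt_or_ge 0 y with hy | hy
  · exact mul_sub_le_oddPow_sub_of_pos hα hc hF hxy hy
  rcases hxy.eq_or_lt with rfl | hlt
  · simp
  have hsq : (y ^ 2) ^ α ≤ (x ^ 2) ^ α :=
    rpow_le_rpow (sq_nonneg y) (by nlinarith) (by linarith)
  calc (2 * α + 1) * (y - x) * (y ^ 2) ^ α ≤ (2 * α + 1) * (-x - -y) * ((-x) ^ 2) ^ α := by
        rw [neg_sq, neg_sub_neg]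
        exact mul_le_mul_of_nonneg_left hsq (by nlinarith)
    _ ≤ (c ^ 2) ^ α * (oddPow α (-x) - oddPow α (-y)) :=
        mul_sub_le_oddPow_sub_of_pos hα hc hF (neg_le_neg hxy) (by linarith)
    _ = (c ^ 2) ^ α * (oddPow α y - oddPow α x) := by rw [oddPow_neg, oddPow_neg]; ring

lemma rpow_le_oddPow_sub_div_of_pos {u x t : ℝ} (hu : 0 < u) (ht₀ : 0 < t) (ht₁ : t ≤ 1) :
    t ^ (c ^ 2) ^ α ≤ (oddPow α (u * t + x) - oddPow α x) / (oddPow α (u + x) - oddPow α x) := by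
  have hden : 0 < oddPow α (u + x) - oddPow α x :=
    sub_pos.2 (oddPow_strictMono (by linarith) (by linarith))
  have hg : ∀ τ : ℝ, HasDerivAt (fun τ => oddPow α (u * τ + x) - oddPow α x)
      ((2 * α + 1) * ((u * τ + x) ^ 2) ^ α * u) τ := fun τ =>
    ((hasDerivAt_oddPow hα _).comp τ
      (((hasDerivAt_id' τ).const_mul u).add_const x |>.congr_deriv (mul_one u))).sub_const _
  have hg_le : ∀ τ ∈ Icc t 1, τ * ((2 * α + 1) * ((u * τ + x) ^ 2) ^ α * u) ≤
      (c ^ 2) ^ α * (oddPow α (u * τ + x) - oddPow α x) := fun τ hτ => by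
    have := mul_sub_le_oddPow_sub hα hc hF (x := x) (y := u * τ + x)
      (by nlinarith [ht₀.trans_le hτ.1])
    linarith
  rw [le_div_iff₀ hden]
  simpa using rpow_mul_le_of_mul_deriv_le ht₀ ht₁ (fun τ _ => hg τ) hg_le

lemma rpow_le_oddPow_sub_div {u x t : ℝ} (hu : u ≠ 0) (ht₀ : 0 < t) (ht₁ : t ≤ 1) :
    t ^ (c ^ 2) ^ α ≤ (oddPow α (u * t + x) - oddPow α x) / (oddPow α (u + x) - oddPow α x) := by
  rcases hu.lt_or_gt with hu | hu
  · have := rpow_le_oddPow_sub_div_of_pos hα hc hF (neg_pos.2 hu) (x := -x) ht₀ ht₁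
    rwa [neg_mul, ← neg_add, ← neg_add, oddPow_neg, oddPow_neg, oddPow_neg, ← neg_sub',
      ← neg_sub', neg_div_neg_eq] at this
  · exact rpow_le_oddPow_sub_div_of_pos hα hc hF hu ht₀ ht₁

end chordBound

theorem stmt_10_general (α : ℝ) (hα : 1 ≤ α) (x₀ u₀ : ℝ) (hu₀ : u₀ ≠ 0)
    (m : ℝ) (hm : m ∈ Ico (-3 : ℝ) (-2))
    (hmeq : ((m + 1) ^ 2) ^ α * (m + 1) = (2 * α + 1) * m + 1) :
    ∀ t ∈ Ioc (0 : ℝ) 1,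
      t * (((u₀ * t + x₀) ^ 2) ^ α * (u₀ * t + x₀) - (x₀ ^ 2) ^ α * x₀) /
          (((u₀ + x₀) ^ 2) ^ α * (u₀ + x₀) - (x₀ ^ 2) ^ α * x₀)
        ≥ t ^ (2 * ((α + 1) * m + 1) / (m + 1)) := by
  intro t ht
  have hc : 0 < -(m + 1) := by linarith [hm.2]
  have hF : (2 * α + 1) * -(m + 1) + 2 * α ≤ oddPow α (-(m + 1)) := by
    rw [oddPow_neg, oddPow, hmeq]
    linarith
  have hN : 2 * ((α + 1) * m + 1) / (m + 1) = ((m + 1) ^ 2) ^ α + 1 := by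
    rw [div_eq_iff (neg_pos.1 hc).ne]
    linear_combination -hmeq
  have hratio := rpow_le_oddPow_sub_div hα hc hF hu₀ (x := x₀) ht.1 ht.2
  rw [neg_sq] at hratio
  rw [ge_iff_le, hN, rpow_add_one ht.1.ne', mul_div_assoc, mul_comm]
  exact mul_le_mul_of_nonneg_left hratio ht.1.le

/-- the distortion coefficient of the `α`-Grushin plane for two points on the same
horizontal line is bounded below by `t^N` with `N = 2((α+1)m+1)/(m+1)`, where `m ∈ [−3,−2)` is
the unique nonzero solution of `(m+1)^{2α}(m+1) = (2α+1)m+1`.  Here `z^{2α}` denotes `(z²)^α`. -/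
theorem stmt_10 (α : ℝ) (hα : 1 ≤ α) (x₀ u₀ : ℝ) (hu₀ : u₀ ≠ 0)
    (m : ℝ) (hm : m ∈ Ico (-3 : ℝ) (-2)) (hm0 : m ≠ 0)
    (hmeq : ((m + 1) ^ 2) ^ α * (m + 1) = (2 * α + 1) * m + 1)
    (hm1 : α = 1 → m = -3)
    (hden : ((u₀ + x₀) ^ 2) ^ α * (u₀ + x₀) - (x₀ ^ 2) ^ α * x₀ ≠ 0) :
    ∀ t ∈ Ioc (0 : ℝ) 1,
      t * (((u₀ * t + x₀) ^ 2) ^ α * (u₀ * t + x₀) - (x₀ ^ 2) ^ α * x₀) /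
          (((u₀ + x₀) ^ 2) ^ α * (u₀ + x₀) - (x₀ ^ 2) ^ α * x₀)
        ≥ t ^ (2 * ((α + 1) * m + 1) / (m + 1)) :=
  stmt_10_general α hα x₀ u₀ hu₀ m hm hmeq
end

section
/- Let α ≥ 1. The maximum over (x, y) ∈ ℝ² (with (x+y)^{2α}(x+y) ≠ y^{2α}y) of the function f(x,y) = ((2(α+1)x + y)(x+y)^{2α} − y·y^{2α}) / ((x+y)(x+y)^{2α} − y·y^{2α}) equals 2((α+1)m + 1)/(m+1), where m ∈ [−3, −2) is the unique nonzero solution of (m+1)^{2α}(m+1) = (2α+1)m + 1 (m = −3 if α = 1). -/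
open Set

/-!
Write `φ = oddRpow α`, `φ(u) = u (u²)^α`, and `p = 2α + 1`. With `t = x + y`, `s = y` the
function is `1 + p (t - s) (t²)^α / (φ t - φ s)`, so the claim is that this difference quotient is
at most `C = ((m+1)²)^α`, with equality at `(s, t) = (1, m + 1)`. The quotient is unchanged under
`(s, t) ↦ (-s, -t)`, so one may assume `s < t`. For `t ≤ 0`, `φ` is concave on `(-∞, 0]` and the
quotient is at most `1 ≤ C`. For `t > 0`, scaling to `t = 1` and using the multiplicativity of `φ`,
the bound becomes `p τ - 2α ≤ φ τ` for `τ ≥ m + 1`: the graph of `φ` lies above its tangent at `1`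
to the right of the second point `m + 1` where this tangent meets it, as `φ - p·id` increases on
`(-∞, -1]`, decreases on `[-1, 1]` and increases on `[1, ∞)`.
-/

noncomputable def oddRpow (α u : ℝ) : ℝ := u * (u ^ 2) ^ α

lemma oddRpow_neg (α x : ℝ) : oddRpow α (-x) = -oddRpow α x := by
  simp only [oddRpow, neg_sq, neg_mul]

lemma oddRpow_mul (α x y : ℝ) : oddRpow α (x * y) = oddRpow α x * oddRpow α y := by
  simp only [oddRpow, mul_pow, Real.mul_rpow (sq_nonneg x) (sq_nonneg y)]
  ring

lemma oddRpow_one (α : ℝ) : oddRpow α 1 = 1 := by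
  simp [oddRpow]

lemma strictMono_oddRpow {α : ℝ} (hα : 0 ≤ α) : StrictMono (oddRpow α) := by
  refine strictMono_of_odd_strictMonoOn_nonneg (oddRpow_neg α) fun u hu v _ huv => ?_
  have hu : 0 ≤ u := hu
  calc u * (u ^ 2) ^ α ≤ u * (v ^ 2) ^ α := by gcongr
    _ < v * (v ^ 2) ^ α := by gcongr; exact Real.rpow_pos_of_pos (pow_pos (hu.trans_lt huv) 2) α

lemma hasDerivAt_oddRpow {α : ℝ} (hα : 1 ≤ α) (t : ℝ) :
    HasDerivAt (oddRpow α) ((2 * α + 1) * (t ^ 2) ^ α) t := by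
  have hsq : HasDerivAt (fun u : ℝ => u ^ 2) (2 * t) t := by simpa using hasDerivAt_pow 2 t
  have hpow : (t ^ 2) ^ (α - 1) * t ^ 2 = (t ^ 2) ^ α := by
    rw [← Real.rpow_add_one' (sq_nonneg t) (by linarith), sub_add_cancel]
  refine ((hasDerivAt_id t).mul (hsq.rpow_const (Or.inr hα))).congr_deriv ?_
  simp only [id]
  rw [← hpow]
  ring

lemma hasDerivAt_oddRpow_sub_mul {α : ℝ} (hα : 1 ≤ α) (t : ℝ) :
    HasDerivAt (fun u => oddRpow α u - (2 * α + 1) * u) ((2 * α + 1) * ((t ^ 2) ^ α - 1)) t :=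
  ((hasDerivAt_oddRpow hα t).sub ((hasDerivAt_id' t).const_mul (2 * α + 1))).congr_deriv (by ring)

lemma tangent_at_one_le_oddRpow {α a τ : ℝ} (hα : 1 ≤ α) (ha : a ≤ -1)
    (hroot : oddRpow α a = (2 * α + 1) * a - 2 * α) (hτ : a ≤ τ) :
    (2 * α + 1) * τ - 2 * α ≤ oddRpow α τ := by
  set χ := fun u => oddRpow α u - (2 * α + 1) * u
  have hderiv := hasDerivAt_oddRpow_sub_mul hα
  have hcont : Continuous χ := continuous_iff_continuousAt.2 fun t => (hderiv t).continuousAt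
  have hderivWithin : ∀ D : Set ℝ, ∀ t ∈ interior D,
      HasDerivWithinAt χ ((2 * α + 1) * ((t ^ 2) ^ α - 1)) (interior D) t :=
    fun _ t _ => (hderiv t).hasDerivWithinAt
  have hα' : 0 ≤ α := by linarith
  have hmono_left : MonotoneOn χ (Iic (-1)) := by
    refine monotoneOn_of_hasDerivWithinAt_nonneg (convex_Iic _) hcont.continuousOn
      (hderivWithin _) fun t ht => ?_
    rw [interior_Iic, mem_Iio] at ht
    have : 1 ≤ (t ^ 2) ^ α := Real.one_le_rpow (by nlinarith) hα'
    nlinarith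
  have hanti_mid : AntitoneOn χ (Icc (-1) 1) := by
    refine antitoneOn_of_hasDerivWithinAt_nonpos (convex_Icc _ _) hcont.continuousOn
      (hderivWithin _) fun t ht => ?_
    rw [interior_Icc, mem_Ioo] at ht
    have : (t ^ 2) ^ α ≤ 1 := Real.rpow_le_one (sq_nonneg t) (by nlinarith) hα'
    nlinarith
  have hmono_right : MonotoneOn χ (Ici 1) := by
    refine monotoneOn_of_hasDerivWithinAt_nonneg (convex_Ici _) hcont.continuousOn
      (hderivWithin _) fun t ht => ?_
    rw [interior_Ici, mem_Ioi] at ht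
    have : 1 ≤ (t ^ 2) ^ α := Real.one_le_rpow (by nlinarith) hα'
    nlinarith
  have hχ : χ a ≤ χ τ ∨ χ 1 ≤ χ τ := by
    rcases le_or_gt τ (-1) with h₁ | h₁
    · exact .inl (hmono_left (mem_Iic.2 ha) (mem_Iic.2 h₁) hτ)
    rcases le_or_gt τ 1 with h₂ | h₂
    · exact .inr (hanti_mid ⟨h₁.le, h₂⟩ ⟨by norm_num, le_rfl⟩ h₂)
    · exact .inr (hmono_right (mem_Ici.2 le_rfl) (mem_Ici.2 h₂.le) h₂.le)
  simp only [χ, hroot, oddRpow_one] at hχ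
  rcases hχ with h | h <;> linarith

lemma mul_sub_mul_le_oddRpow_sub_of_nonpos {α s t : ℝ} (hα : 1 ≤ α) (hst : s < t)
    (ht : t ≤ 0) :
    (2 * α + 1) * (t - s) * (t ^ 2) ^ α ≤ oddRpow α t - oddRpow α s := by
  obtain ⟨c, hc, hslope⟩ := exists_hasDerivAt_eq_slope (oddRpow α) _ hst
    (continuous_iff_continuousAt.2 fun u => (hasDerivAt_oddRpow hα u).continuousAt).continuousOn
    (fun u _ => hasDerivAt_oddRpow hα u)
  rw [eq_div_iff (sub_ne_zero.2 hst.ne')] at hslope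
  rw [← hslope, mul_right_comm]
  have : t ^ 2 ≤ c ^ 2 := by nlinarith [hc.1, hc.2]
  gcongr

lemma mul_sub_mul_le_rpow_mul_oddRpow_sub_of_pos {α a s t : ℝ} (hα : 1 ≤ α) (ha : a ≤ -1)
    (hroot : oddRpow α a = (2 * α + 1) * a - 2 * α) (hst : s < t) (ht : 0 < t) :
    (2 * α + 1) * (t - s) * (t ^ 2) ^ α ≤ (a ^ 2) ^ α * (oddRpow α t - oddRpow α s) := by
  set σ := s / t
  have hs : s = σ * t := (div_mul_cancel₀ s ht.ne').symm
  have hσ : σ < 1 := (div_lt_one ht).2 hst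
  have htangent := tangent_at_one_le_oddRpow hα ha hroot (show a ≤ a * σ by nlinarith)
  rw [oddRpow_mul] at htangent
  have hroot' : a * (a ^ 2) ^ α = (2 * α + 1) * a - 2 * α := hroot
  have hscaled : (2 * α + 1) * (1 - σ) ≤ (a ^ 2) ^ α * (1 - oddRpow α σ) := by
    simp only [oddRpow] at htangent hroot' ⊢
    nlinarith
  have hφt : 0 < oddRpow α t := mul_pos ht (Real.rpow_pos_of_pos (by positivity) α)
  calc (2 * α + 1) * (t - s) * (t ^ 2) ^ α = (2 * α + 1) * (1 - σ) * oddRpow α t := by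
        rw [hs, oddRpow]; ring
    _ ≤ (a ^ 2) ^ α * (1 - oddRpow α σ) * oddRpow α t := by gcongr
    _ = (a ^ 2) ^ α * (oddRpow α t - oddRpow α s) := by rw [hs, oddRpow_mul]; ring

lemma mul_sub_mul_le_rpow_mul_oddRpow_sub {α a s t : ℝ} (hα : 1 ≤ α) (ha : a ≤ -1)
    (hroot : oddRpow α a = (2 * α + 1) * a - 2 * α) (hst : s < t) :
    (2 * α + 1) * (t - s) * (t ^ 2) ^ α ≤ (a ^ 2) ^ α * (oddRpow α t - oddRpow α s) := by
  rcases le_or_gt t 0 with ht | ht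
  · have hC : 1 ≤ (a ^ 2) ^ α := Real.one_le_rpow (by nlinarith) (by linarith)
    have hφ : 0 ≤ oddRpow α t - oddRpow α s :=
      sub_nonneg.2 (strictMono_oddRpow (by linarith) hst).le
    exact (mul_sub_mul_le_oddRpow_sub_of_nonpos hα hst ht).trans (le_mul_of_one_le_left hφ hC)
  · exact mul_sub_mul_le_rpow_mul_oddRpow_sub_of_pos hα ha hroot hst ht

lemma mul_sub_mul_div_oddRpow_sub_le_rpow {α a s t : ℝ} (hα : 1 ≤ α) (ha : a ≤ -1)
    (hroot : oddRpow α a = (2 * α + 1) * a - 2 * α) (hst : s ≠ t) :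
    (2 * α + 1) * (t - s) * (t ^ 2) ^ α / (oddRpow α t - oddRpow α s) ≤ (a ^ 2) ^ α := by
  have hmono := strictMono_oddRpow (α := α) (by linarith)
  rcases hst.lt_or_gt with h | h
  · rw [div_le_iff₀ (sub_pos.2 (hmono h))]
    exact mul_sub_mul_le_rpow_mul_oddRpow_sub hα ha hroot h
  · rw [div_le_iff_of_neg (sub_neg.2 (hmono h))]
    have := mul_sub_mul_le_rpow_mul_oddRpow_sub hα ha hroot (neg_lt_neg h)
    rw [oddRpow_neg, oddRpow_neg, neg_sq] at this
    linarith

theorem stmt_11_general (α : ℝ) (hα : 1 ≤ α)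
    (m : ℝ) (hm : m ∈ Ico (-3 : ℝ) (-2))
    (hmeq : ((m + 1) ^ 2) ^ α * (m + 1) = (2 * α + 1) * m + 1) :
    IsGreatest
      {r : ℝ | ∃ x y : ℝ, (x + y) * ((x + y) ^ 2) ^ α - y * (y ^ 2) ^ α ≠ 0 ∧
        r = ((2 * (α + 1) * x + y) * ((x + y) ^ 2) ^ α - y * (y ^ 2) ^ α) /
            ((x + y) * ((x + y) ^ 2) ^ α - y * (y ^ 2) ^ α)}
      (2 * ((α + 1) * m + 1) / (m + 1)) := by
  have ha : m + 1 ≤ -1 := by linarith [hm.2]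
  have hroot : oddRpow α (m + 1) = (2 * α + 1) * (m + 1) - 2 * α := by
    unfold oddRpow; linear_combination hmeq
  have hvalue : 2 * ((α + 1) * m + 1) / (m + 1) = 1 + ((m + 1) ^ 2) ^ α := by
    rw [div_eq_iff (by linarith)]; linear_combination -hmeq
  have hsplit : ∀ x y : ℝ, oddRpow α (x + y) - oddRpow α y ≠ 0 →
      ((2 * (α + 1) * x + y) * ((x + y) ^ 2) ^ α - y * (y ^ 2) ^ α) /
        ((x + y) * ((x + y) ^ 2) ^ α - y * (y ^ 2) ^ α) =
      1 + (2 * α + 1) * (x + y - y) * ((x + y) ^ 2) ^ α /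
        (oddRpow α (x + y) - oddRpow α y) := by
    intro x y hD
    rw [one_add_div hD, oddRpow, oddRpow]
    ring
  have hD : oddRpow α (m + 1) - oddRpow α 1 = (2 * α + 1) * m := by
    rw [hroot, oddRpow_one]; ring
  have hDne : (2 * α + 1) * m ≠ 0 := mul_ne_zero (by linarith) (by linarith [hm.2])
  refine ⟨⟨m, 1, hD ▸ hDne, ?_⟩, ?_⟩
  · rw [hsplit m 1 (hD ▸ hDne), hvalue, hD, add_sub_cancel_right, mul_div_cancel_left₀ _ hDne]
  · rintro _ ⟨x, y, hD, rfl⟩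
    rw [hsplit x y hD, hvalue]
    have hxy : y ≠ x + y := fun h => hD (by rw [← h]; ring)
    linarith [mul_sub_mul_div_oddRpow_sub_le_rpow hα ha hroot hxy]

/-- the maximum of
`f(x,y) = ((2(α+1)x + y)(x+y)^{2α} − y·y^{2α}) / ((x+y)(x+y)^{2α} − y·y^{2α})`
over the set where the denominator is nonzero equals `2((α+1)m+1)/(m+1)`, where `m ∈ [−3,−2)`
is the unique nonzero solution of `(m+1)^{2α}(m+1) = (2α+1)m+1`.  `z^{2α}` denotes `(z²)^α`. -/
theorem stmt_11 (α : ℝ) (hα : 1 ≤ α)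
    (m : ℝ) (hm : m ∈ Ico (-3 : ℝ) (-2)) (hm0 : m ≠ 0)
    (hmeq : ((m + 1) ^ 2) ^ α * (m + 1) = (2 * α + 1) * m + 1)
    (hm1 : α = 1 → m = -3) :
    IsGreatest
      {r : ℝ | ∃ x y : ℝ, (x + y) * ((x + y) ^ 2) ^ α - y * (y ^ 2) ^ α ≠ 0 ∧
        r = ((2 * (α + 1) * x + y) * ((x + y) ^ 2) ^ α - y * (y ^ 2) ^ α) /
            ((x + y) * ((x + y) ^ 2) ^ α - y * (y ^ 2) ^ α)}
      (2 * ((α + 1) * m + 1) / (m + 1)) :=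
  stmt_11_general α hα m hm hmeq
end

section
/- Let α ≥ 1 and define g(z) = α(3α−1)z − (α−1)² sin_α(z) cos_α(z) for z ∈ [0, π_α]. Then g'(z) = (α+1)(α² − (α−1)² cos_α(z)²) > 0, so g is strictly increasing and g(z) > 0 for z ∈ (0, π_α]. -/
open Set

/-!
Differentiating and using `s' = c`, `c' = -α s^(2α-1)` and `s · s^(2α-1) = s^(2α) = 1 - c²` gives
`g' = α(3α-1) - (α-1)²((α+1)c² - α) = (α+1)(α² - (α-1)²c²)`. Since `c² ≤ 1`, this is at least
`(α+1)(2α-1) > 0`; hence `g` is strictly increasing and `g z > g 0 = 0` for `z > 0`.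
-/

lemma Real.mul_rpow_two_mul_sub_one {x a : ℝ} (hx : 0 ≤ x) (ha : a ≠ 0) :
    x * x ^ (2 * a - 1) = (x ^ 2) ^ a := by
  rcases hx.eq_or_lt with rfl | hx
  · simp [Real.zero_rpow ha]
  · rw [← Real.rpow_natCast, ← Real.rpow_mul hx.le, ← Real.rpow_one_add' hx.le (by norm_num [ha])]
    norm_num

lemma hasDerivWithinAt_mul_sub_sq_mul_mul {s c : ℝ → ℝ} {S : Set ℝ} {α z : ℝ}
    (hs : HasDerivWithinAt s (c z) S z) (hc : HasDerivWithinAt c (-α * s z ^ (2 * α - 1)) S z)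
    (hα : α ≠ 0) (hsz : 0 ≤ s z) (hpyth : (s z ^ 2) ^ α + c z ^ 2 = 1) :
    HasDerivWithinAt (fun z => α * (3 * α - 1) * z - (α - 1) ^ 2 * s z * c z)
      ((α + 1) * (α ^ 2 - (α - 1) ^ 2 * c z ^ 2)) S z := by
  have hsc : s z * s z ^ (2 * α - 1) = 1 - c z ^ 2 := by
    rw [Real.mul_rpow_two_mul_sub_one hsz hα]; linarith
  exact (((hasDerivWithinAt_id z S).const_mul (α * (3 * α - 1))).sub
    ((hs.const_mul ((α - 1) ^ 2)).mul hc)).congr_deriv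
    (by linear_combination (α * (α - 1) ^ 2) * hsc)

lemma mul_sq_sub_sq_mul_sq_pos {α c : ℝ} (hα : 1 / 2 < α) (hc : c ^ 2 ≤ 1) :
    0 < (α + 1) * (α ^ 2 - (α - 1) ^ 2 * c ^ 2) := by
  have : (α - 1) ^ 2 * c ^ 2 ≤ (α - 1) ^ 2 := mul_le_of_le_one_right (sq_nonneg _) hc
  apply mul_pos <;> nlinarith

theorem stmt_14_general (α : ℝ) (hα : 1 ≤ α) (πα : ℝ) (s c : ℝ → ℝ)
    (hs : ∀ z ∈ Icc 0 πα, HasDerivWithinAt s (c z) (Icc 0 πα) z)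
    (hc : ∀ z ∈ Icc 0 πα,
      HasDerivWithinAt c (-α * s z ^ (2 * α - 1)) (Icc 0 πα) z)
    (hs0 : s 0 = 0)
    (hsnonneg : ∀ z ∈ Icc 0 πα, 0 ≤ s z)
    (hpyth : ∀ z ∈ Icc 0 πα, (s z ^ 2) ^ α + c z ^ 2 = 1) :
    (∀ z ∈ Icc 0 πα,
      HasDerivWithinAt (fun z => α * (3 * α - 1) * z - (α - 1) ^ 2 * s z * c z)
        ((α + 1) * (α ^ 2 - (α - 1) ^ 2 * c z ^ 2)) (Icc 0 πα) z ∧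
      0 < (α + 1) * (α ^ 2 - (α - 1) ^ 2 * c z ^ 2)) ∧
    StrictMonoOn (fun z => α * (3 * α - 1) * z - (α - 1) ^ 2 * s z * c z) (Icc 0 πα) ∧
    (∀ z ∈ Ioc 0 πα, 0 < α * (3 * α - 1) * z - (α - 1) ^ 2 * s z * c z) := by
  have hderiv z (hz : z ∈ Icc 0 πα) :=
    hasDerivWithinAt_mul_sub_sq_mul_mul (hs z hz) (hc z hz) (by positivity) (hsnonneg z hz)
      (hpyth z hz)
  have hc_sq z (hz : z ∈ Icc 0 πα) : c z ^ 2 ≤ 1 := by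
    linarith [hpyth z hz, Real.rpow_nonneg (sq_nonneg (s z)) α]
  have hpos z (hz : z ∈ Icc 0 πα) : 0 < (α + 1) * (α ^ 2 - (α - 1) ^ 2 * c z ^ 2) :=
    mul_sq_sub_sq_mul_sq_pos (by linarith) (hc_sq z hz)
  have hmono : StrictMonoOn (fun z => α * (3 * α - 1) * z - (α - 1) ^ 2 * s z * c z)
      (Icc 0 πα) :=
    strictMonoOn_of_hasDerivWithinAt_pos (convex_Icc 0 πα) (HasDerivWithinAt.continuousOn hderiv)
      (fun z hz => (hderiv z (interior_subset hz)).mono interior_subset)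
      (fun z hz => hpos z (interior_subset hz))
  refine ⟨fun z hz => ⟨hderiv z hz, hpos z hz⟩, hmono, fun z hz => ?_⟩
  simpa [hs0] using hmono ⟨le_rfl, hz.1.le.trans hz.2⟩ (Ioc_subset_Icc_self hz) hz.1

/-- for `g(z) = α(3α−1)z − (α−1)² sin_α(z) cos_α(z)` on `[0, π_α]`, one has
`g'(z) = (α+1)(α² − (α−1)² cos_α(z)²) > 0`, so `g` is strictly increasing and positive on
`(0, π_α]`. -/
theorem stmt_14 (α : ℝ) (hα : 1 ≤ α) (πα : ℝ) (hπα : 0 < πα) (s c : ℝ → ℝ)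
    (hs : ∀ z ∈ Icc 0 πα, HasDerivWithinAt s (c z) (Icc 0 πα) z)
    (hc : ∀ z ∈ Icc 0 πα,
      HasDerivWithinAt c (-α * s z ^ (2 * α - 1)) (Icc 0 πα) z)
    (hs0 : s 0 = 0)
    (hsnonneg : ∀ z ∈ Icc 0 πα, 0 ≤ s z)
    (hpyth : ∀ z ∈ Icc 0 πα, (s z ^ 2) ^ α + c z ^ 2 = 1) :
    (∀ z ∈ Icc 0 πα,
      HasDerivWithinAt (fun z => α * (3 * α - 1) * z - (α - 1) ^ 2 * s z * c z)
        ((α + 1) * (α ^ 2 - (α - 1) ^ 2 * c z ^ 2)) (Icc 0 πα) z ∧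
      0 < (α + 1) * (α ^ 2 - (α - 1) ^ 2 * c z ^ 2)) ∧
    StrictMonoOn (fun z => α * (3 * α - 1) * z - (α - 1) ^ 2 * s z * c z) (Icc 0 πα) ∧
    (∀ z ∈ Ioc 0 πα, 0 < α * (3 * α - 1) * z - (α - 1) ^ 2 * s z * c z) :=
  stmt_14_general α hα πα s c hs hc hs0 hsnonneg hpyth
end

section
/- Let α ≥ 1, N₁ ≥ 2α + 1 and h(z) = sin_α(z) − z cos_α(z). Then for all 0 < t ≤ 1 and 0 < z ≤ π_α: h(tz)/h(z) ≥ t^{N₁}. -/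
open Set

/-- for `α ≥ 1`, `N₁ ≥ 2α + 1` and `h(z) = sin_α(z) − z cos_α(z)`, one has
`h(tz)/h(z) ≥ t^{N₁}` for all `0 < t ≤ 1` and `0 < z ≤ π_α`. -/
theorem stmt_15 (α : ℝ) (hα : 1 ≤ α) (N₁ : ℝ) (hN₁ : 2 * α + 1 ≤ N₁)
    (πα : ℝ) (hπα : 0 < πα) (s c : ℝ → ℝ)
    (hs : ∀ z ∈ Icc 0 πα, HasDerivWithinAt s (c z) (Icc 0 πα) z)
    (hc : ∀ z ∈ Icc 0 πα,
      HasDerivWithinAt c (-α * s z ^ (2 * α - 1)) (Icc 0 πα) z)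
    (hs0 : s 0 = 0) (hc0 : c 0 = 1)
    (hsnonneg : ∀ z ∈ Icc 0 πα, 0 ≤ s z)
    (hspos : ∀ z ∈ Ioo 0 πα, 0 < s z) :
    ∀ t ∈ Ioc (0 : ℝ) 1, ∀ z ∈ Ioc (0 : ℝ) πα,
      (s (t * z) - t * z * c (t * z)) / (s z - z * c z) ≥ t ^ N₁ := by
  have hα0 : (0 : ℝ) < α := lt_of_lt_of_le one_pos hα
  set p : ℝ := 2 * α - 1 with hp_def
  have hp1 : (1 : ℝ) ≤ p := by simp only [hp_def]; linarith
  set h : ℝ → ℝ := fun z => s z - z * c z with hh_def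
  -- derivative of h within Icc
  have hh' : ∀ z ∈ Icc 0 πα,
      HasDerivWithinAt h (α * z * s z ^ p) (Icc 0 πα) z := by
    intro z hz
    have : HasDerivWithinAt h (c z - (1 * c z + z * (-α * s z ^ p))) (Icc 0 πα) z :=
      (hs z hz).sub ((hasDerivWithinAt_id z (Icc 0 πα)).mul (hc z hz))
    convert this using 1
    ring
  have hIcc_int : interior (Icc (0:ℝ) πα) = Ioo 0 πα := interior_Icc
  have hhcont : ContinuousOn h (Icc 0 πα) := fun z hz => (hh' z hz).continuousWithinAt
  -- h is strictly monotone on Icc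
  have hhmono : StrictMonoOn h (Icc 0 πα) := by
    apply strictMonoOn_of_hasDerivWithinAt_pos (convex_Icc 0 πα) hhcont
    · intro x hx
      rw [hIcc_int] at hx ⊢
      exact (hh' x (Ioo_subset_Icc_self hx)).mono Ioo_subset_Icc_self
    · intro x hx
      rw [hIcc_int] at hx
      exact mul_pos (mul_pos hα0 hx.1) (Real.rpow_pos_of_pos (hspos x hx) p)
  have hh0 : h 0 = 0 := by simp [hh_def, hs0]
  have hhpos : ∀ z ∈ Ioc (0:ℝ) πα, 0 < h z := by
    intro z hz
    have := hhmono (left_mem_Icc.2 hπα.le) ⟨hz.1.le, hz.2⟩ hz.1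
    rwa [hh0] at this
  have hhnonneg : ∀ z ∈ Icc (0:ℝ) πα, 0 ≤ h z := by
    intro z hz
    rcases eq_or_lt_of_le hz.1 with h0 | h0
    · rw [← h0, hh0]
    · exact (hhpos z ⟨h0, hz.2⟩).le
  -- derivatives at interior points
  have hsD : ∀ x ∈ Ioo (0:ℝ) πα, HasDerivAt s (c x) x := fun x hx =>
    (hs x (Ioo_subset_Icc_self hx)).hasDerivAt (Icc_mem_nhds hx.1 hx.2)
  have hcD : ∀ x ∈ Ioo (0:ℝ) πα, HasDerivAt c (-α * s x ^ p) x := fun x hx =>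
    (hc x (Ioo_subset_Icc_self hx)).hasDerivAt (Icc_mem_nhds hx.1 hx.2)
  have hhD : ∀ x ∈ Ioo (0:ℝ) πα, HasDerivAt h (α * x * s x ^ p) x := by
    intro x hx
    have : HasDerivAt h (c x - (1 * c x + x * (-α * s x ^ p))) x :=
      (hsD x hx).sub ((hasDerivAt_id x).mul (hcD x hx))
    convert this using 1
    ring
  -- the auxiliary function F
  set F : ℝ → ℝ := fun z => (2 * α + 1) * h z - α * (z ^ 2 * s z ^ p) with hF_def
  have hFD : ∀ x ∈ Ioo (0:ℝ) πα,
      HasDerivAt F (α * (2 * α - 1) * x * s x ^ (p - 1) * h x) x := by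
    intro x hx
    have hrp : HasDerivAt (fun y => s y ^ p) (c x * p * s x ^ (p - 1)) x :=
      (hsD x hx).rpow_const (Or.inr hp1)
    have hmul : HasDerivAt (fun z => z ^ 2 * s z ^ p)
        ((2 : ℕ) * x ^ 1 * s x ^ p + x ^ 2 * (c x * p * s x ^ (p - 1))) x :=
      (hasDerivAt_pow 2 x).mul hrp
    have : HasDerivAt F
        ((2 * α + 1) * (α * x * s x ^ p) -
          α * ((2 : ℕ) * x ^ 1 * s x ^ p + x ^ 2 * (c x * p * s x ^ (p - 1)))) x :=
      ((hhD x hx).const_mul _).sub (hmul.const_mul α)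
    convert this using 1
    have hsx : s x ≠ 0 := (hspos x hx).ne'
    have hsp : s x ^ p = s x ^ (p - 1) * s x := by
      rw [← Real.rpow_add_one hsx (p - 1)]
      ring_nf
    rw [hsp]
    simp only [hh_def, hp_def]
    push_cast
    ring
  have hFcont : ContinuousOn F (Icc 0 πα) := by
    have hscont : ContinuousOn s (Icc 0 πα) := fun z hz => (hs z hz).continuousWithinAt
    have : ContinuousOn (fun z => s z ^ p) (Icc 0 πα) :=
      hscont.rpow_const (fun x _ => Or.inr (by linarith))
    exact (hhcont.const_smul (2 * α + 1)).sub
      (((continuousOn_pow 2).mul this).const_smul α)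
  have hFmono : MonotoneOn F (Icc 0 πα) := by
    apply monotoneOn_of_hasDerivWithinAt_nonneg (convex_Icc 0 πα) hFcont
    · intro x hx
      rw [hIcc_int] at hx ⊢
      exact (hFD x hx).hasDerivWithinAt
    · intro x hx
      rw [hIcc_int] at hx
      have h1 : 0 ≤ s x ^ (p - 1) := Real.rpow_nonneg (hsnonneg x (Ioo_subset_Icc_self hx)) _
      have h2 : 0 ≤ h x := hhnonneg x (Ioo_subset_Icc_self hx)
      have h3 : (0:ℝ) ≤ 2 * α - 1 := by linarith
      have h4 : 0 ≤ x := hx.1.le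
      positivity
  have hF0 : F 0 = 0 := by simp [hF_def, hh0]
  have hFnonneg : ∀ z ∈ Icc (0:ℝ) πα, 0 ≤ F z := by
    intro z hz
    have := hFmono (left_mem_Icc.2 hπα.le) hz hz.1
    rwa [hF0] at this
  -- key inequality : z h'(z) ≤ N₁ h(z)
  have hkey : ∀ z ∈ Icc (0:ℝ) πα, α * (z ^ 2 * s z ^ p) ≤ N₁ * h z := by
    intro z hz
    have h1 := hFnonneg z hz
    have h2 : (2 * α + 1) * h z ≤ N₁ * h z :=
      mul_le_mul_of_nonneg_right hN₁ (hhnonneg z hz)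
    simp only [hF_def, sub_nonneg] at h1
    linarith
  -- g(z) = h z * z ^ (-N₁) is antitone on Ioc 0 πα
  set g : ℝ → ℝ := fun z => h z * z ^ (-N₁) with hg_def
  have hganti : AntitoneOn g (Ioc 0 πα) := by
    apply antitoneOn_of_hasDerivWithinAt_nonpos (convex_Ioc 0 πα)
      (f' := fun x => α * x * s x ^ p * x ^ (-N₁) + h x * (-N₁ * x ^ (-N₁ - 1)))
    · have h1 : ContinuousOn h (Ioc 0 πα) := hhcont.mono Ioc_subset_Icc_self
      have h2 : ContinuousOn (fun z : ℝ => z ^ (-N₁)) (Ioc 0 πα) :=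
        ContinuousOn.rpow_const continuousOn_id (fun x hx => Or.inl hx.1.ne')
      exact h1.mul h2
    · intro x hx
      rw [interior_Ioc] at hx ⊢
      have hrp : HasDerivAt (fun z : ℝ => z ^ (-N₁)) (-N₁ * x ^ (-N₁ - 1)) x :=
        Real.hasDerivAt_rpow_const (Or.inl hx.1.ne')
      exact (((hhD x hx).mul hrp)).hasDerivWithinAt
    · intro x hx
      rw [interior_Ioc] at hx
      have hx0 : x ≠ 0 := hx.1.ne'
      have hpow : x ^ (-N₁) = x ^ (-N₁ - 1) * x := by
        rw [← Real.rpow_add_one hx0 (-N₁ - 1)]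
        ring_nf
      rw [hpow]
      have hkx := hkey x (Ioo_subset_Icc_self hx)
      have h1 : 0 ≤ x ^ (-N₁ - 1) := Real.rpow_nonneg hx.1.le _
      have : α * x * s x ^ p * (x ^ (-N₁ - 1) * x) + h x * (-N₁ * x ^ (-N₁ - 1))
          = x ^ (-N₁ - 1) * (α * (x ^ 2 * s x ^ p) - N₁ * h x) := by ring
      rw [this]
      exact mul_nonpos_of_nonneg_of_nonpos h1 (by linarith)
  -- conclusion
  intro t ht z hz
  have htz : t * z ∈ Ioc (0:ℝ) πα :=
    ⟨mul_pos ht.1 hz.1, le_trans (mul_le_of_le_one_left hz.1.le ht.2) hz.2⟩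
  have hle : g z ≤ g (t * z) := hganti htz hz (mul_le_of_le_one_left hz.1.le ht.2)
  have htz0 : (0:ℝ) < t * z := htz.1
  have hzN : (0:ℝ) < z ^ N₁ := Real.rpow_pos_of_pos hz.1 N₁
  have htzN : (0:ℝ) < (t * z) ^ N₁ := Real.rpow_pos_of_pos htz0 N₁
  -- h (t*z) ≥ t^N₁ * h z
  have hmain : t ^ N₁ * h z ≤ h (t * z) := by
    have hstep : h z * z ^ (-N₁) * (t * z) ^ N₁ ≤ h (t * z) * (t * z) ^ (-N₁) * (t * z) ^ N₁ :=
      mul_le_mul_of_nonneg_right hle htzN.le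
    have e1 : h (t * z) * (t * z) ^ (-N₁) * (t * z) ^ N₁ = h (t * z) := by
      rw [mul_assoc, ← Real.rpow_add htz0, neg_add_cancel, Real.rpow_zero, mul_one]
    have e2 : h z * z ^ (-N₁) * (t * z) ^ N₁ = t ^ N₁ * h z := by
      rw [Real.mul_rpow ht.1.le hz.1.le, Real.rpow_neg hz.1.le]
      field_simp
    rw [e1, e2] at hstep
    exact hstep
  have hhz : 0 < h z := hhpos z hz
  rw [ge_iff_le, le_div_iff₀ hhz]
  exact hmain
end
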